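/- arXiv:1410.5062 — 6 statements merged into one kernel-verified Lean document; each statement's English description precedes it below -/
import Mathlib

section
/- Let t ≥ 1, let E_1,…,E_t be pairwise disjoint finite universes, and for each i let p_i ≤ k_i be natural numbers and let F_i be an (E_i,k_i,p_i)-good family of subsets of E_i. Let S be a finite family of subsets of E = E_1 ∪ … ∪ E_t such that |S ∩ E_i| = p_i for every S ∈ S and every i, and let w : S → ℝ. Then there exists a subfamily Ŝ ⊆ S with |Ŝ| ≤ |F_1|·|F_2|·…·|F_t| that max (k_1−p_1, k_2−p_2, …, k_t−p_t)-represents S. -/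
/-!
For every choice `g ∈ F₁ × ⋯ × Fₜ` keep one maximum-weight member of `𝒮` whose trace on each
`Eᵢ` lies inside `gᵢ`; this keeps at most `|F₁|⋯|Fₜ|` sets. Given `X ∈ 𝒮` and an admissible `Y`,
goodness of each `Fᵢ` yields `gᵢ ∈ Fᵢ` containing `X ∩ Eᵢ` and avoiding `Y ∩ Eᵢ`. The member
kept for `g` weighs at least `w X`, and since it is covered by the `gᵢ` it avoids `Y`.
-/

/-- A family `F` of subsets of `E'` is `(E', k', p')`-good if for every set `X ⊆ E'` with
`|X| = p'` and every set `Y ⊆ E' \ X` with `|Y| ≤ k' - p'`, there is `f ∈ F` such that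
`X ⊆ f` and `Y ∩ f = ∅`. -/
def IsGoodFamily {U : Type*} [DecidableEq U] (E' : Finset U) (k' p' : ℕ)
    (F : Finset (Finset U)) : Prop :=
  ∀ X ⊆ E', X.card = p' → ∀ Y ⊆ E' \ X, Y.card ≤ k' - p' →
    ∃ f ∈ F, X ⊆ f ∧ f ∩ Y = ∅

open Finset

theorem Finset.exists_subset_card_le_forall_exists_ge {α κ β : Type*} [LinearOrder β]
    (𝒮 : Finset α) (G : Finset κ) (R : κ → α → Prop) (w : α → β) :
    ∃ 𝒮' ⊆ 𝒮, #𝒮' ≤ #G ∧ ∀ g ∈ G, ∀ X ∈ 𝒮, R g X → ∃ X' ∈ 𝒮', R g X' ∧ w X ≤ w X' := by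
  classical
  induction G using Finset.induction_on with
  | empty => exact ⟨∅, empty_subset _, by simp, by simp⟩
  | @insert g G hg ih =>
    obtain ⟨𝒮₀, h𝒮₀, hcard, hrep⟩ := ih
    by_cases hne : (𝒮.filter (R g)).Nonempty
    · obtain ⟨M, hM, hMmax⟩ := exists_max_image _ w hne
      obtain ⟨hM𝒮, hMR⟩ := mem_filter.1 hM
      refine ⟨insert M 𝒮₀, insert_subset hM𝒮 h𝒮₀, ?_, ?_⟩
      · rw [card_insert_of_notMem hg]
        exact (card_insert_le _ _).trans (Nat.succ_le_succ hcard)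
      rintro g' hg' X hX hRX
      rcases mem_insert.1 hg' with rfl | hg'
      · exact ⟨M, mem_insert_self _ _, hMR, hMmax X (mem_filter.2 ⟨hX, hRX⟩)⟩
      · obtain ⟨X', hX', hRX', hw⟩ := hrep g' hg' X hX hRX
        exact ⟨X', mem_insert_of_mem hX', hRX', hw⟩
    · refine ⟨𝒮₀, h𝒮₀, hcard.trans (card_le_card (subset_insert _ _)), ?_⟩
      rintro g' hg' X hX hRX
      rcases mem_insert.1 hg' with rfl | hg'
      · exact absurd ⟨X, mem_filter.2 ⟨hX, hRX⟩⟩ hne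
      · exact hrep g' hg' X hX hRX

theorem IsGoodFamily.exists_inter_subset_disjoint {U : Type*} [DecidableEq U]
    {E' : Finset U} {k' p' : ℕ} {F : Finset (Finset U)} (hF : IsGoodFamily E' k' p' F)
    {X Y : Finset U} (hX : #(X ∩ E') = p') (hXY : Disjoint X Y) (hY : #(Y ∩ E') ≤ k' - p') :
    ∃ f ∈ F, X ∩ E' ⊆ f ∧ Disjoint f (Y ∩ E') := by
  have hYX : Y ∩ E' ⊆ E' \ (X ∩ E') := fun a ha => by
    obtain ⟨haY, haE⟩ := mem_inter.1 ha
    exact mem_sdiff.2 ⟨haE, fun h => disjoint_left.1 hXY (mem_inter.1 h).1 haY⟩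
  obtain ⟨f, hf, hXf, hfY⟩ := hF (X ∩ E') inter_subset_right hX (Y ∩ E') hYX hY
  exact ⟨f, hf, hXf, disjoint_iff_inter_eq_empty.2 hfY⟩

theorem Finset.disjoint_of_inter_subset_of_disjoint {U ι : Type*} [DecidableEq U]
    {s : Finset ι} {E f : ι → Finset U} {X Y : Finset U} (hX : X ⊆ s.biUnion E)
    (hXf : ∀ i ∈ s, X ∩ E i ⊆ f i) (hfY : ∀ i ∈ s, Disjoint (f i) (Y ∩ E i)) :
    Disjoint X Y := by
  refine disjoint_left.2 fun a haX haY => ?_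
  obtain ⟨i, hi, haE⟩ := mem_biUnion.1 (hX haX)
  exact disjoint_left.1 (hfY i hi) (hXf i hi (mem_inter.2 ⟨haX, haE⟩)) (mem_inter.2 ⟨haY, haE⟩)

theorem stmt0_general {U : Type*} [DecidableEq U] (t : ℕ)
    (E : Fin t → Finset U)
    (p k : Fin t → ℕ)
    (F : Fin t → Finset (Finset U))
    (hFgood : ∀ i, IsGoodFamily (E i) (k i) (p i) (F i))
    (𝒮 : Finset (Finset U))
    (h𝒮 : ∀ S ∈ 𝒮, S ⊆ Finset.univ.biUnion E ∧ ∀ i, (S ∩ E i).card = p i)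
    (w : Finset U → ℝ) :
    ∃ 𝒮' ⊆ 𝒮, 𝒮'.card ≤ ∏ i, (F i).card ∧
      ∀ X ∈ 𝒮, ∀ Y ⊆ Finset.univ.biUnion E \ X,
        (∀ i, (Y ∩ E i).card ≤ k i - p i) →
        ∃ X' ∈ 𝒮', X' ∩ Y = ∅ ∧ w X ≤ w X' := by
  obtain ⟨𝒮', h𝒮'𝒮, hcard, hrep⟩ := exists_subset_card_le_forall_exists_ge 𝒮
    (Fintype.piFinset F) (fun g S => ∀ i, S ∩ E i ⊆ g i) w
  refine ⟨𝒮', h𝒮'𝒮, hcard.trans_eq (Fintype.card_piFinset F), fun X hX Y hY hYk => ?_⟩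
  have hXY : Disjoint X Y := (disjoint_of_subset_left hY sdiff_disjoint).symm
  choose g hgF hXg hgY using fun i =>
    (hFgood i).exists_inter_subset_disjoint ((h𝒮 X hX).2 i) hXY (hYk i)
  obtain ⟨X', hX', hX'g, hw⟩ := hrep g (Fintype.mem_piFinset.2 hgF) X hX hXg
  have hX'Y : Disjoint X' Y := disjoint_of_inter_subset_of_disjoint (h𝒮 X' (h𝒮'𝒮 hX')).1
    (fun i _ => hX'g i) (fun i _ => hgY i)
  exact ⟨X', hX', disjoint_iff_inter_eq_empty.1 hX'Y, hw⟩

theorem stmt0 {U : Type*} [DecidableEq U] (t : ℕ) (ht : 1 ≤ t)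
    (E : Fin t → Finset U) (hdisj : ∀ i j, i ≠ j → Disjoint (E i) (E j))
    (p k : Fin t → ℕ) (hpk : ∀ i, p i ≤ k i)
    (F : Fin t → Finset (Finset U))
    (hFsub : ∀ i, ∀ f ∈ F i, f ⊆ E i)
    (hFgood : ∀ i, IsGoodFamily (E i) (k i) (p i) (F i))
    (𝒮 : Finset (Finset U))
    (h𝒮 : ∀ S ∈ 𝒮, S ⊆ Finset.univ.biUnion E ∧ ∀ i, (S ∩ E i).card = p i)
    (w : Finset U → ℝ) :
    ∃ 𝒮' ⊆ 𝒮, 𝒮'.card ≤ ∏ i, (F i).card ∧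
      ∀ X ∈ 𝒮, ∀ Y ⊆ Finset.univ.biUnion E \ X,
        (∀ i, (Y ∩ E i).card ≤ k i - p i) →
        ∃ X' ∈ 𝒮', X' ∩ Y = ∅ ∧ w X ≤ w X' :=
  stmt0_general t E p k F hFgood 𝒮 h𝒮 w
end

section
/- Let G = (V,E) be a finite directed graph, r ∈ V a node such that G has an out-branching rooted at r, and k ≥ q ≥ 0 natural numbers. Suppose G has an out-tree T' rooted at r with exactly k−q internal nodes, and q pairwise node-disjoint directed paths on 2 nodes in G none of whose nodes belongs to T'. Then G has an out-branching rooted at r with at least k internal nodes. -/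
variable {V : Type*}

/-- The node set of a rooted set `A` of directed edges with root `r`: the root together
with all endpoints of edges of `A`. -/
def otNodes [DecidableEq V] (A : Finset (V × V)) (r : V) : Finset V :=
  insert r (A.image Prod.fst ∪ A.image Prod.snd)

/-- `A` is the edge set of an out-tree rooted at `r`: edges join distinct nodes, the root
has in-degree `0`, every other node has in-degree exactly `1`, and every node is
reachable from the root along directed edges.  (This is equivalent to: the underlying
undirected graph is a tree and `r` is the unique node of in-degree `0`.) -/
structure IsOutTree [DecidableEq V] (A : Finset (V × V)) (r : V) : Prop where
  ne : ∀ e ∈ A, e.1 ≠ e.2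
  root_no_in : ∀ e ∈ A, e.2 ≠ r
  in_unique : ∀ v ∈ otNodes A r, v ≠ r → (A.filter fun e => e.2 = v).card = 1
  reach : ∀ v ∈ otNodes A r, Relation.ReflTransGen (fun a b => (a, b) ∈ A) r v

/-- The number of internal nodes (nodes of out-degree at least `1`) of the out-tree with
edge set `A` and root `r`. -/
def internalCount [DecidableEq V] (A : Finset (V × V)) (r : V) : ℕ :=
  ((otNodes A r).filter fun v => (A.filter fun e => e.1 = v).Nonempty).card

/-- The number of leaves (nodes of out-degree `0`) of the out-tree with edge set `A`
and root `r`. -/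
def leafCount [DecidableEq V] (A : Finset (V × V)) (r : V) : ℕ :=
  ((otNodes A r).filter fun v => A.filter (fun e => e.1 = v) = ∅).card

/-- `A` is (the edge set of) an out-tree of the digraph `G` rooted at `r`. -/
def IsOutTreeOf [DecidableEq V] (G : V → V → Prop) (A : Finset (V × V)) (r : V) : Prop :=
  (∀ e ∈ A, G e.1 e.2) ∧ IsOutTree A r

/-- `A` is (the edge set of) an out-branching of `G` rooted at `r`: an out-tree of `G`
rooted at `r` whose node set is all of `V`. -/
def IsOutBranchingOf [DecidableEq V] [Fintype V] (G : V → V → Prop) (A : Finset (V × V))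
    (r : V) : Prop :=
  IsOutTreeOf G A r ∧ otNodes A r = Finset.univ

/-- The two nodes of a directed edge. -/
def pairNodes [DecidableEq V] (e : V × V) : Finset V := {e.1, e.2}

/-- `P` is a collection of pairwise node-disjoint directed paths on two nodes in `G`
(each such path being a directed edge of `G` with distinct endpoints). -/
def IsDisjointTwoPaths [DecidableEq V] (G : V → V → Prop) (P : Finset (V × V)) : Prop :=
  (∀ e ∈ P, G e.1 e.2 ∧ e.1 ≠ e.2) ∧
  ∀ e ∈ P, ∀ e' ∈ P, e ≠ e' → Disjoint (pairNodes e) (pairNodes e')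

/-!
Grow `T` into an out-branching in which every path `(a, b)` of `P` has an internal node. Add a
shortest path from the current tree to `a`: its nodes outside the tree are new and distinct, and
all of them except its endpoint `a` become internal; if `b` is not on it, append the edge `ab`,
which makes `a` internal. Any other path of `P` met on the way is disjoint from `(a, b)`, so it
is met in an internal node as well. In the final out-branching the `k - q` internal nodes of `T`
stay internal, and one internal node chosen from each of the `q` paths gives `q` further ones,
pairwise distinct and outside `T`.
-/

open Finset Relation

theorem Relation.ReflTransGen.exists_isChain_exit {α : Type*} {R : α → α → Prop} {C : Set α}
    {w a : α} (h : ReflTransGen R w a) (hw : w ∈ C) (ha : a ∉ C) :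
    ∃ u ∈ C, ∃ l : List α, List.IsChain R (u :: (l ++ [a])) ∧ (l ++ [a]).Nodup ∧
      ∀ x ∈ l, x ∉ C := by
  classical
  have hex : ∃ n, ∃ u ∈ C, ∃ l : List α, l.length = n ∧ List.IsChain R (u :: (l ++ [a])) := by
    obtain ⟨l, hl, hlast⟩ := List.exists_isChain_cons_of_relationReflTransGen h
    obtain rfl | ⟨l, b, rfl⟩ := l.eq_nil_or_concat'
    · exact absurd (hlast ▸ hw) ha
    · rw [List.getLast_cons (by simp), List.getLast_concat] at hlast
      exact ⟨_, w, hw, l, rfl, hlast ▸ hl⟩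
  -- A shortest chain works: a node of `C` on it, or a repeated node, would give a shorter one.
  obtain ⟨u, hu, l, hlen, hl⟩ := Nat.find_spec hex
  have shorter : ∀ v ∈ C, ∀ m : List α, List.IsChain R (v :: (m ++ [a])) → l.length ≤ m.length :=
    fun v hv m hm => hlen ▸ Nat.find_min' hex ⟨v, hv, m, rfl, hm⟩
  have hfresh : ∀ x ∈ l, x ∉ C := by
    intro x hx hxC
    obtain ⟨s, t, rfl⟩ := List.append_of_mem hx
    have := shorter x hxC t (hl.suffix ⟨u :: s, by simp⟩)
    simp only [List.length_append, List.length_cons] at this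
    omega
  have ha_notMem : a ∉ l := by
    intro hal
    obtain ⟨s, t, rfl⟩ := List.append_of_mem hal
    have := shorter u hu s (hl.prefix ⟨t ++ [a], by simp⟩)
    simp only [List.length_append, List.length_cons] at this
    omega
  have hnd : l.Nodup := by
    refine List.nodup_iff_sublist.2 fun x hxx => ?_
    obtain ⟨r₁, r₂, rfl, hx₁, hx₂⟩ := List.cons_sublist_iff.1 hxx
    obtain ⟨s, m, rfl⟩ := List.append_of_mem hx₁
    obtain ⟨m', t, rfl⟩ := List.append_of_mem (List.singleton_sublist.1 hx₂)
    have hpre : List.IsChain R (u :: s ++ [x]) := hl.prefix ⟨m ++ m' ++ x :: t ++ [a], by simp⟩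
    have hsuf : List.IsChain R (x :: t ++ [a]) := hl.suffix ⟨u :: s ++ x :: m ++ m', by simp⟩
    have := shorter u hu (s ++ x :: t) (by simpa using List.isChain_split.2 ⟨hpre, hsuf⟩)
    simp only [List.length_append, List.length_cons] at this
    omega
  exact ⟨u, hu, l, hl, List.concat_eq_append ▸ hnd.concat ha_notMem, hfresh⟩

section

variable [DecidableEq V] {G : V → V → Prop} {r u v : V} {A : Finset (V × V)}

lemma mem_otNodes {x : V} :
    x ∈ otNodes A r ↔ x = r ∨ (∃ e ∈ A, e.1 = x) ∨ ∃ e ∈ A, e.2 = x := by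
  simp [otNodes]

lemma root_mem_otNodes : r ∈ otNodes A r := mem_insert_self _ _

lemma fst_mem_otNodes {e : V × V} (he : e ∈ A) : e.1 ∈ otNodes A r :=
  mem_otNodes.2 (Or.inr (Or.inl ⟨e, he, rfl⟩))

lemma snd_mem_otNodes {e : V × V} (he : e ∈ A) : e.2 ∈ otNodes A r :=
  mem_otNodes.2 (Or.inr (Or.inr ⟨e, he, rfl⟩))

lemma otNodes_insert_of_mem (hu : u ∈ otNodes A r) :
    otNodes (insert (u, v) A) r = insert v (otNodes A r) := by
  have : otNodes (insert (u, v) A) r = insert u (insert v (otNodes A r)) := by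
    ext x
    simp only [otNodes, mem_insert, mem_union, image_insert]
    tauto
  rw [this, insert_eq_of_mem (mem_insert_of_mem hu)]

lemma internalCount_eq_card_image_fst : internalCount A r = (A.image Prod.fst).card := by
  unfold internalCount
  congr 1
  ext v
  simp only [mem_filter, mem_image, Finset.Nonempty]
  constructor
  · rintro ⟨-, e, he, rfl⟩
    exact ⟨e, he, rfl⟩
  · rintro ⟨e, he, rfl⟩
    exact ⟨fst_mem_otNodes he, e, by simp [he]⟩

lemma mem_pairNodes {e : V × V} : v ∈ pairNodes e ↔ v = e.1 ∨ v = e.2 := by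
  simp [pairNodes]

lemma IsDisjointTwoPaths.mono {P P' : Finset (V × V)} (hP : IsDisjointTwoPaths G P)
    (h : P' ⊆ P) : IsDisjointTwoPaths G P' :=
  ⟨fun e he => hP.1 e (h he), fun e he e' he' => hP.2 e (h he) e' (h he')⟩

lemma IsOutBranchingOf.reflTransGen [Fintype V] {B : Finset (V × V)}
    (hB : IsOutBranchingOf G B r) (v : V) : ReflTransGen G r v :=
  ReflTransGen.mono (fun a b hab => hB.1.1 (a, b) hab) _ _ (hB.1.2.reach v (hB.2 ▸ mem_univ v))

namespace IsOutTreeOf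

lemma insert_edge (hA : IsOutTreeOf G A r) (huv : G u v) (hu : u ∈ otNodes A r)
    (hv : v ∉ otNodes A r) : IsOutTreeOf G (insert (u, v) A) r := by
  have hvr : v ≠ r := fun h => hv (h ▸ root_mem_otNodes)
  have hnodes := otNodes_insert_of_mem (v := v) hu
  refine ⟨?_, ⟨?_, ?_, ?_, ?_⟩⟩
  · simpa [huv] using hA.1
  · have huv' : u ≠ v := fun h => hv (h ▸ hu)
    simpa [huv'] using hA.2.ne
  · simpa [hvr] using hA.2.root_no_in
  · intro x hx hxr
    rw [hnodes, mem_insert] at hx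
    rw [filter_insert]
    rcases hx with rfl | hx
    · have hnone : A.filter (fun e => e.2 = x) = ∅ :=
        filter_eq_empty_iff.2 fun e he hex => hv (hex ▸ snd_mem_otNodes he)
      simp [hnone]
    · rw [if_neg fun h : v = x => hv (h ▸ hx)]
      exact hA.2.in_unique x hx hxr
  · intro x hx
    have lift : ∀ {y}, ReflTransGen (fun a b => (a, b) ∈ A) r y →
        ReflTransGen (fun a b => (a, b) ∈ insert (u, v) A) r y :=
      ReflTransGen.mono (fun a b hab => mem_insert_of_mem hab) _ _
    rw [hnodes, mem_insert] at hx
    rcases hx with rfl | hx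
    · exact (lift (hA.2.reach u hu)).tail (mem_insert_self _ _)
    · exact lift (hA.2.reach x hx)

lemma exists_extend_of_isChain {l : List V} (hA : IsOutTreeOf G A r) (hu : u ∈ otNodes A r)
    (hl : List.IsChain G (u :: l)) (hnd : l.Nodup) (hfresh : ∀ x ∈ l, x ∉ otNodes A r) :
    ∃ A', A ⊆ A' ∧ IsOutTreeOf G A' r ∧ otNodes A' r = otNodes A r ∪ l.toFinset ∧
      ∀ x ∈ (u :: l).dropLast, ∃ y, (x, y) ∈ A' := by
  induction l generalizing u A with
  | nil => exact ⟨A, subset_rfl, hA, by simp, by simp⟩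
  | cons x t ih =>
    obtain ⟨hux, ht⟩ := List.isChain_cons_cons.1 hl
    obtain ⟨hxt, hnd⟩ := List.nodup_cons.1 hnd
    have hx := hfresh x List.mem_cons_self
    have hnodes := otNodes_insert_of_mem (v := x) hu
    obtain ⟨A', hA'sub, hA', hnodes', hout⟩ :=
      ih (hA.insert_edge hux hu hx) (hnodes ▸ mem_insert_self _ _) ht hnd fun y hy => by
        rw [hnodes, mem_insert, not_or]
        exact ⟨fun h => hxt (h ▸ hy), hfresh y (List.mem_cons_of_mem _ hy)⟩
    refine ⟨A', (subset_insert _ _).trans hA'sub, hA', ?_, ?_⟩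
    · rw [hnodes', hnodes]
      ext y
      simp
    · rw [List.dropLast_cons_cons, List.forall_mem_cons]
      exact ⟨⟨x, hA'sub (mem_insert_self _ _)⟩, hout⟩

lemma exists_outBranching_superset [Fintype V] (hreach : ∀ v, ReflTransGen G r v)
    (hA : IsOutTreeOf G A r) : ∃ B, A ⊆ B ∧ IsOutBranchingOf G B r := by
  induction h : (otNodes A r)ᶜ.card using Nat.strong_induction_on generalizing A with
  | _ n ih =>
  by_cases hall : otNodes A r = univ
  · exact ⟨A, subset_rfl, hA, hall⟩
  obtain ⟨a, ha⟩ : ∃ a, a ∉ otNodes A r := by simpa [eq_univ_iff_forall] using hall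
  obtain ⟨u, hu, l, hl, hnd, hfresh⟩ :=
    (hreach a).exists_isChain_exit (C := ↑(otNodes A r)) root_mem_otNodes ha
  obtain ⟨A', hAA', hA', hnodes, -⟩ :=
    hA.exists_extend_of_isChain hu hl hnd (by simpa [or_imp, forall_and, ha] using hfresh)
  have hgrow : otNodes A r ⊂ otNodes A' r :=
    (ssubset_iff_of_subset (hnodes ▸ subset_union_left)).2 ⟨a, by simp [hnodes], ha⟩
  obtain ⟨B, hA'B, hB⟩ := ih _ (h ▸ card_lt_card (compl_ssubset_compl.2 hgrow)) hA' rfl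
  exact ⟨B, hAA'.trans hA'B, hB⟩

lemma exists_extend_covering_edge {a b : V} (hA : IsOutTreeOf G A r)
    (hreach : ReflTransGen G r a) (hab : G a b) (hne : a ≠ b) (ha : a ∉ otNodes A r)
    (hb : b ∉ otNodes A r) :
    ∃ A', A ⊆ A' ∧ IsOutTreeOf G A' r ∧ a ∈ otNodes A' r ∧
      ((∃ y, (a, y) ∈ A') ∨ ∃ y, (b, y) ∈ A') ∧
      ∀ x ∈ otNodes A' r, x ∉ otNodes A r → x ≠ a → x ≠ b → ∃ y, (x, y) ∈ A' := by
  obtain ⟨u, hu, l, hl, hnd, hfresh⟩ :=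
    hreach.exists_isChain_exit (C := ↑(otNodes A r)) root_mem_otNodes ha
  by_cases hbl : b ∈ l
  · obtain ⟨A', hAA', hA', hnodes, hpath⟩ :=
      hA.exists_extend_of_isChain hu hl hnd (by simpa [or_imp, forall_and, ha] using hfresh)
    have hout : ∀ x ∈ l, ∃ y, (x, y) ∈ A' := fun x hx => hpath x <| by
      rw [← List.cons_append, List.dropLast_concat]
      exact List.mem_cons_of_mem _ hx
    refine ⟨A', hAA', hA', by simp [hnodes], Or.inr (hout b hbl), fun x hx hxA hxa _ => ?_⟩
    rw [hnodes] at hx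
    exact hout x (by simpa [hxA, hxa] using hx)
  · have hl' : List.IsChain G (u :: (l ++ [a] ++ [b])) := by
      simpa using (List.isChain_split (l₁ := u :: l)).2 ⟨hl, List.isChain_pair.2 hab⟩
    have hnd' : (l ++ [a] ++ [b]).Nodup :=
      List.concat_eq_append ▸ hnd.concat (by simpa [hbl] using hne.symm)
    obtain ⟨A', hAA', hA', hnodes, hpath⟩ := hA.exists_extend_of_isChain (l := l ++ [a] ++ [b])
      hu hl' hnd' (by simpa [or_imp, forall_and, ha, hb] using hfresh)
    have hout : ∀ x ∈ l ++ [a], ∃ y, (x, y) ∈ A' := fun x hx => hpath x <| by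
      rw [← List.cons_append, List.dropLast_concat]
      exact List.mem_cons_of_mem _ hx
    refine ⟨A', hAA', hA', by simp [hnodes], Or.inl (hout a (by simp)),
      fun x hx hxA hxa hxb => ?_⟩
    rw [hnodes] at hx
    exact hout x (by simpa [hxA, hxa, hxb] using hx)

lemma exists_outBranching_covering [Fintype V] {P : Finset (V × V)}
    (hreach : ∀ v, ReflTransGen G r v) (hA : IsOutTreeOf G A r) (hP : IsDisjointTwoPaths G P)
    (hPA : ∀ e ∈ P, Disjoint (pairNodes e) (otNodes A r)) :
    ∃ B, A ⊆ B ∧ IsOutBranchingOf G B r ∧ ∀ e ∈ P, ∃ v ∈ pairNodes e, ∃ w, (v, w) ∈ B := by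
  induction P using Finset.strongInduction generalizing A with
  | H P ih =>
  obtain rfl | ⟨e₀, he₀⟩ := P.eq_empty_or_nonempty
  · obtain ⟨B, hAB, hB⟩ := hA.exists_outBranching_superset hreach
    exact ⟨B, hAB, hB, by simp⟩
  have ha₀ : e₀.1 ∉ otNodes A r := disjoint_left.1 (hPA e₀ he₀) (mem_pairNodes.2 (Or.inl rfl))
  have hb₀ : e₀.2 ∉ otNodes A r := disjoint_left.1 (hPA e₀ he₀) (mem_pairNodes.2 (Or.inr rfl))
  obtain ⟨A', hAA', hA', ha₀', hcov₀, hnew⟩ :=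
    hA.exists_extend_covering_edge (hreach _) (hP.1 e₀ he₀).1 (hP.1 e₀ he₀).2 ha₀ hb₀
  set P' := P.filter fun e => Disjoint (pairNodes e) (otNodes A' r)
  have hP'P : P' ⊂ P := filter_ssubset.2
    ⟨e₀, he₀, fun h => disjoint_left.1 h (mem_pairNodes.2 (Or.inl rfl)) ha₀'⟩
  obtain ⟨B, hA'B, hB, hcovB⟩ :=
    ih P' hP'P hA' (hP.mono (filter_subset _ _)) fun e he => (mem_filter.1 he).2
  have lift : ∀ {v}, (∃ w, (v, w) ∈ A') → ∃ w, (v, w) ∈ B := fun ⟨w, hw⟩ => ⟨w, hA'B hw⟩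
  refine ⟨B, hAA'.trans hA'B, hB, fun e he => ?_⟩
  by_cases heP' : e ∈ P'
  · exact hcovB e heP'
  by_cases hee₀ : e = e₀
  · subst hee₀
    rcases hcov₀ with h | h
    · exact ⟨_, mem_pairNodes.2 (Or.inl rfl), lift h⟩
    · exact ⟨_, mem_pairNodes.2 (Or.inr rfl), lift h⟩
  obtain ⟨v, hve, hvA'⟩ := not_disjoint_iff.1 fun h => heP' (mem_filter.2 ⟨he, h⟩)
  have hv₀ := disjoint_left.1 (hP.2 e he e₀ he₀ hee₀) hve
  rw [mem_pairNodes, not_or] at hv₀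
  exact ⟨v, hve, lift (hnew v hvA' (disjoint_left.1 (hPA e he) hve) hv₀.1 hv₀.2)⟩

end IsOutTreeOf

lemma internalCount_add_card_le {T B P : Finset (V × V)} (hTB : T ⊆ B)
    (hP : ∀ e ∈ P, ∀ e' ∈ P, e ≠ e' → Disjoint (pairNodes e) (pairNodes e'))
    (hPT : ∀ e ∈ P, Disjoint (pairNodes e) (otNodes T r))
    (hcov : ∀ e ∈ P, ∃ v ∈ pairNodes e, ∃ w, (v, w) ∈ B) :
    internalCount T r + P.card ≤ internalCount B r := by
  have : Nonempty V := ⟨r⟩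
  choose! f hfe hfB using hcov
  have hinj : Set.InjOn f P := fun e he e' he' h => by_contra fun hne =>
    disjoint_left.1 (hP e he e' he' hne) (hfe e he) (h ▸ hfe e' he')
  have hdisj : Disjoint (T.image Prod.fst) (P.image f) := by
    refine disjoint_right.2 ?_
    rintro _ hv hT
    obtain ⟨e, he, rfl⟩ := mem_image.1 hv
    obtain ⟨d, hd, hde⟩ := mem_image.1 hT
    exact disjoint_left.1 (hPT e he) (hfe e he) (hde ▸ fst_mem_otNodes hd)
  have hsub : T.image Prod.fst ∪ P.image f ⊆ B.image Prod.fst := by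
    refine union_subset (image_subset_image hTB) fun v hv => ?_
    obtain ⟨e, he, rfl⟩ := mem_image.1 hv
    obtain ⟨w, hw⟩ := hfB e he
    exact mem_image.2 ⟨_, hw, rfl⟩
  rw [internalCount_eq_card_image_fst, internalCount_eq_card_image_fst,
    ← card_image_of_injOn hinj, ← card_union_of_disjoint hdisj]
  exact card_le_card hsub

end

theorem stmt3 [DecidableEq V] [Fintype V] (G : V → V → Prop) (r : V) (k q : ℕ) (hqk : q ≤ k)
    (hbr : ∃ B : Finset (V × V), IsOutBranchingOf G B r)
    (T : Finset (V × V)) (hT : IsOutTreeOf G T r) (hTint : internalCount T r = k - q)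
    (P : Finset (V × V)) (hPcard : P.card = q) (hP : IsDisjointTwoPaths G P)
    (hPT : ∀ e ∈ P, Disjoint (pairNodes e) (otNodes T r)) :
    ∃ B : Finset (V × V), IsOutBranchingOf G B r ∧ k ≤ internalCount B r := by
  obtain ⟨B₀, hB₀⟩ := hbr
  obtain ⟨B, hTB, hB, hcov⟩ := hT.exists_outBranching_covering hB₀.reflTransGen hP hPT
  have hcount := internalCount_add_card_le hTB hP.2 hPT hcov
  exact ⟨B, hB, by omega⟩
end

section
/- Let T be an out-tree in which every leaf is at distance at least 2 from the root, and such that for every leaf both its father and its grandfather have out-degree exactly 1 in T. Then the number of leaves of T is at most half the number of internal nodes of T (i.e., 2·(number of leaves) ≤ number of internal nodes). -/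
variable {V : Type*}

/-!
Every leaf `u` has a father `p`, and `p` has a father `g`; both have out-degree `1`. Since `p`
has the single child `u` and `g` the single child `p`, the maps `u ↦ p` and `p ↦ g` are
injective, so the fathers `F` and the grandfathers `G` of leaves are each at least as many as
the leaves. Moreover `F` and `G` are disjoint: the only child of a node of `F` is a leaf,
while that of a node of `G` is internal. Hence `2 · #leaves ≤ #F + #G ≤ #internal nodes`.
-/

open Finset

section Parents

variable [DecidableEq V] {A : Finset (V × V)}

def parents (A : Finset (V × V)) (s : Finset V) : Finset V :=
  (A.filter fun e => e.2 ∈ s).image Prod.fst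

theorem mem_parents {s : Finset V} {p : V} : p ∈ parents A s ↔ ∃ v ∈ s, (p, v) ∈ A := by
  simp [parents, and_comm]

theorem eq_of_card_filter_fst_le_one {p x y : V} (hp : #(A.filter fun e => e.1 = p) ≤ 1)
    (hx : (p, x) ∈ A) (hy : (p, y) ∈ A) : x = y :=
  congrArg Prod.snd <| card_le_one.mp hp (p, x) (by simp [hx]) (p, y) (by simp [hy])

theorem card_le_card_parents {s : Finset V} (hs : ∀ v ∈ s, ∃ p, (p, v) ∈ A)
    (hp : ∀ p ∈ parents A s, #(A.filter fun e => e.1 = p) ≤ 1) : #s ≤ #(parents A s) := by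
  refine card_le_card_of_forall_subsingleton (fun v p => (p, v) ∈ A) ?_ ?_
  · intro v hv
    obtain ⟨p, hpv⟩ := hs v hv
    exact ⟨p, mem_parents.mpr ⟨v, hv, hpv⟩, hpv⟩
  · intro p hp' x hx y hy
    exact eq_of_card_filter_fst_le_one (hp p hp') hx.2 hy.2

theorem parents_subset_internal (s : Finset V) (r : V) :
    parents A s ⊆ (otNodes A r).filter fun v => (A.filter fun e => e.1 = v).Nonempty := by
  intro p hp
  obtain ⟨v, -, hpv⟩ := mem_parents.mp hp
  refine mem_filter.mpr ⟨?_, ⟨(p, v), by simp [hpv]⟩⟩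
  simp only [otNodes, mem_insert, mem_union, mem_image]
  exact Or.inr (Or.inl ⟨(p, v), hpv, rfl⟩)

theorem disjoint_parents_parents_parents {s : Finset V}
    (hs : ∀ u ∈ s, A.filter (fun e => e.1 = u) = ∅)
    (hp : ∀ p ∈ parents A s, #(A.filter fun e => e.1 = p) ≤ 1) :
    Disjoint (parents A s) (parents A (parents A s)) := by
  refine disjoint_left.mpr fun p hF hG => ?_
  obtain ⟨u, hu, hpu⟩ := mem_parents.mp hF
  obtain ⟨q, hq, hpq⟩ := mem_parents.mp hG
  obtain ⟨w, -, hqw⟩ := mem_parents.mp hq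
  have huq : u = q := eq_of_card_filter_fst_le_one (hp p hF) hpu hpq
  have : (q, w) ∈ A.filter fun e => e.1 = u := by simp [hqw, huq]
  simp [hs u hu] at this

end Parents

theorem IsOutTree.exists_parent [DecidableEq V] {A : Finset (V × V)} {r v : V}
    (hA : IsOutTree A r) (hv : v ∈ otNodes A r) (hvr : v ≠ r) : ∃ p, (p, v) ∈ A := by
  obtain ⟨e, he⟩ := card_pos.mp (hA.in_unique v hv hvr ▸ Nat.one_pos)
  obtain ⟨heA, rfl⟩ := mem_filter.mp he
  exact ⟨e.1, heA⟩

theorem IsOutTree.two_mul_card_le_internalCount [DecidableEq V] {A : Finset (V × V)} {r : V}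
    (hA : IsOutTree A r) {s : Finset V} (hs : ∀ u ∈ s, ∃ p, (p, u) ∈ A)
    (hs_leaf : ∀ u ∈ s, A.filter (fun e => e.1 = u) = ∅)
    (hF : ∀ p ∈ parents A s, p ≠ r ∧ #(A.filter fun e => e.1 = p) ≤ 1)
    (hG : ∀ g ∈ parents A (parents A s), #(A.filter fun e => e.1 = g) ≤ 1) :
    2 * #s ≤ internalCount A r := by
  have hF_deg : ∀ p ∈ parents A s, #(A.filter fun e => e.1 = p) ≤ 1 := fun p hp => (hF p hp).2
  have hF_parent : ∀ p ∈ parents A s, ∃ g, (g, p) ∈ A := fun p hp =>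
    hA.exists_parent (mem_filter.mp (parents_subset_internal s r hp)).1 (hF p hp).1
  have hsF : #s ≤ #(parents A s) := card_le_card_parents hs hF_deg
  have hFG : #(parents A s) ≤ #(parents A (parents A s)) := card_le_card_parents hF_parent hG
  calc 2 * #s = #s + #s := two_mul _
    _ ≤ #(parents A s) + #(parents A (parents A s)) := add_le_add hsF (hsF.trans hFG)
    _ = #(parents A s ∪ parents A (parents A s)) :=
      (card_union_of_disjoint (disjoint_parents_parents_parents hs_leaf hF_deg)).symm
    _ ≤ internalCount A r :=
      card_le_card (union_subset (parents_subset_internal _ r) (parents_subset_internal _ r))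

theorem stmt7 [DecidableEq V] (A : Finset (V × V)) (r : V) (hA : IsOutTree A r)
    (h : ∀ u ∈ otNodes A r, A.filter (fun e => e.1 = u) = ∅ →
      u ≠ r ∧ ∀ e ∈ A, e.2 = u →
        e.1 ≠ r ∧ (A.filter fun e' => e'.1 = e.1).card = 1 ∧
        ∀ e' ∈ A, e'.2 = e.1 → (A.filter fun e'' => e''.1 = e'.1).card = 1) :
    2 * leafCount A r ≤ internalCount A r := by
  set L := (otNodes A r).filter fun v => A.filter (fun e => e.1 = v) = ∅
  have hL : ∀ u ∈ L, u ∈ otNodes A r ∧ A.filter (fun e => e.1 = u) = ∅ := fun u hu =>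
    mem_filter.mp hu
  have hLh u (hu : u ∈ L) := h u (hL u hu).1 (hL u hu).2
  refine hA.two_mul_card_le_internalCount (s := L) ?_ (fun u hu => (hL u hu).2) ?_ ?_
  · exact fun u hu => hA.exists_parent (hL u hu).1 (hLh u hu).1
  · intro p hp
    obtain ⟨u, hu, hpu⟩ := mem_parents.mp hp
    obtain ⟨hpr, hp1, -⟩ := (hLh u hu).2 (p, u) hpu rfl
    exact ⟨hpr, hp1.le⟩
  · intro g hg
    obtain ⟨p, hp, hgp⟩ := mem_parents.mp hg
    obtain ⟨u, hu, hpu⟩ := mem_parents.mp hp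
    exact ((hLh u hu).2 (p, u) hpu rfl).2.2 (g, p) hgp rfl |>.le
end

section
/- Let G = (V,E) be a finite directed graph, r ∈ V a node that is the root of an out-branching of G, and k, ℓ, q natural numbers with ℓ ≤ k and max{0, 2ℓ−k} ≤ q ≤ ℓ. Let T be the family of all node sets of out-trees of G rooted at r that have exactly (k−q) internal nodes and exactly (ℓ−q) leaves, and let T̂ ⊆ T be a family that (2q)-represents T (unweighted, over the universe V). Then G has an out-tree rooted at r with exactly (k−q) internal nodes and (ℓ−q) leaves together with q pairwise node-disjoint directed paths on 2 nodes whose nodes avoid the tree, if and only if there exists X ∈ T̂ such that the underlying undirected graph of the subgraph of G induced by V∖X has a matching of size at least q. -/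
variable {V : Type*}

/-!
Forgetting orientations turns `q` node-disjoint two-node paths outside a node set `X` into a
matching of size `q` in the undirected graph underlying `G - X`; conversely every matching edge
can be oriented along `G`. Given the tree and the paths, the `2q` path nodes avoid the tree's node
set, which lies in `𝒯`, so representativity provides `X' ∈ 𝒯'` that they avoid as well. Given a
matching outside `X ∈ 𝒯' ⊆ 𝒯`, the tree witnessing `X ∈ 𝒯` is avoided by the oriented matching.
-/

noncomputable def orientAlong (G : V → V → Prop) (f : Sym2 V) : V × V :=
  haveI := Classical.dec (G f.out.1 f.out.2)
  if G f.out.1 f.out.2 then f.out else f.out.swap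

lemma orientAlong_spec {G : V → V → Prop} {f : Sym2 V}
    (hf : f ∈ (SimpleGraph.fromRel G).edgeSet) :
    G (orientAlong G f).1 (orientAlong G f).2 ∧ (orientAlong G f).1 ≠ (orientAlong G f).2 ∧
      s((orientAlong G f).1, (orientAlong G f).2) = f := by
  have hout : s(f.out.1, f.out.2) = f := f.out_eq
  rw [← hout, SimpleGraph.mem_edgeSet, SimpleGraph.fromRel_adj] at hf
  obtain ⟨hne, hG⟩ := hf
  unfold orientAlong
  split_ifs with h
  · exact ⟨h, hne, hout⟩
  · exact ⟨hG.resolve_left h, hne.symm, Sym2.eq_swap.trans hout⟩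

section TwoPaths

variable [DecidableEq V] {G : V → V → Prop} {P : Finset (V × V)}

lemma mem_pairNodes_iff_mem_mk {v : V} {e : V × V} : v ∈ pairNodes e ↔ v ∈ s(e.1, e.2) := by
  obtain ⟨a, b⟩ := e
  simp [pairNodes]

lemma card_pairNodes {e : V × V} (he : e.1 ≠ e.2) : (pairNodes e).card = 2 :=
  Finset.card_pair he

lemma IsDisjointTwoPaths.card_biUnion_pairNodes (hP : IsDisjointTwoPaths G P) :
    (P.biUnion pairNodes).card = 2 * P.card := by
  rw [Finset.card_biUnion hP.2, Finset.sum_congr rfl fun e he => card_pairNodes (hP.1 e he).2,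
    Finset.sum_const, smul_eq_mul, mul_comm]

lemma IsDisjointTwoPaths.injOn_mk (hP : IsDisjointTwoPaths G P) :
    Set.InjOn (fun e : V × V => s(e.1, e.2)) (P : Set (V × V)) := by
  intro e he e' he' (h : s(e.1, e.2) = s(e'.1, e'.2))
  by_contra hne
  have h₁ : e.1 ∈ pairNodes e := by simp [pairNodes]
  have h₂ : e.1 ∈ pairNodes e' := mem_pairNodes_iff_mem_mk.2 (h ▸ Sym2.mem_mk_left _ _)
  exact Finset.disjoint_left.1 (hP.2 e he e' he' hne) h₁ h₂

theorem exists_disjointTwoPaths_iff_exists_matching (X : Finset V) (q : ℕ) :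
    (∃ P : Finset (V × V), P.card = q ∧ IsDisjointTwoPaths G P ∧
        ∀ e ∈ P, Disjoint (pairNodes e) X) ↔
    (∃ M : Finset (Sym2 V), q ≤ M.card ∧
        (∀ e ∈ M, e ∈ (SimpleGraph.fromRel G).edgeSet ∧ ∀ v ∈ e, v ∉ X) ∧
        ∀ e ∈ M, ∀ e' ∈ M, e ≠ e' → ∀ v : V, v ∈ e → v ∉ e') := by
  constructor
  · rintro ⟨P, rfl, hP, hPX⟩
    refine ⟨P.image fun e => s(e.1, e.2), (Finset.card_image_of_injOn hP.injOn_mk).ge, ?_, ?_⟩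
    · simp only [Finset.mem_image]
      rintro _ ⟨e, he, rfl⟩
      refine ⟨(SimpleGraph.fromRel_adj G e.1 e.2).2 ⟨(hP.1 e he).2, Or.inl (hP.1 e he).1⟩, ?_⟩
      intro v hv
      exact Finset.disjoint_left.1 (hPX e he) (mem_pairNodes_iff_mem_mk.2 hv)
    · simp only [Finset.mem_image]
      rintro _ ⟨e, he, rfl⟩ _ ⟨e', he', rfl⟩ hne v hv hv'
      refine Finset.disjoint_left.1 (hP.2 e he e' he' ?_) (mem_pairNodes_iff_mem_mk.2 hv)
        (mem_pairNodes_iff_mem_mk.2 hv')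
      exact fun h => hne (h ▸ rfl)
  · rintro ⟨M, hqM, hM, hMdisj⟩
    obtain ⟨M', hM'M, rfl⟩ := Finset.exists_subset_card_eq hqM
    have horient : ∀ f ∈ M', _ := fun f hf => orientAlong_spec (G := G) (hM f (hM'M hf)).1
    have hmk : ∀ f ∈ M', s((orientAlong G f).1, (orientAlong G f).2) = f :=
      fun f hf => (horient f hf).2.2
    have hmem : ∀ f ∈ M', ∀ v, v ∈ pairNodes (orientAlong G f) ↔ v ∈ f := fun f hf v => by
      rw [mem_pairNodes_iff_mem_mk, hmk f hf]
    refine ⟨M'.image (orientAlong G), Finset.card_image_of_injOn fun f hf f' hf' h => ?_,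
      ⟨?_, ?_⟩, ?_⟩
    · rw [← hmk f hf, ← hmk f' hf', h]
    · simp only [Finset.mem_image]
      rintro _ ⟨f, hf, rfl⟩
      exact ⟨(horient f hf).1, (horient f hf).2.1⟩
    · simp only [Finset.mem_image]
      rintro _ ⟨f, hf, rfl⟩ _ ⟨f', hf', rfl⟩ hne
      refine Finset.disjoint_left.2 fun v hv hv' => ?_
      exact hMdisj f (hM'M hf) f' (hM'M hf') (fun h => hne (h ▸ rfl)) v ((hmem f hf v).1 hv)
        ((hmem f' hf' v).1 hv')
    · simp only [Finset.mem_image]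
      rintro _ ⟨f, hf, rfl⟩
      exact Finset.disjoint_left.2 fun v hv => (hM f (hM'M hf)).2 v ((hmem f hf v).1 hv)

end TwoPaths

theorem stmt10_general [DecidableEq V] (G : V → V → Prop) (r : V) (k ℓ q : ℕ)
    (𝒯 : Finset (Finset V))
    (h𝒯 : ∀ X : Finset V, X ∈ 𝒯 ↔ ∃ T : Finset (V × V), IsOutTreeOf G T r ∧
        otNodes T r = X ∧ internalCount T r = k - q ∧ leafCount T r = ℓ - q)
    (𝒯' : Finset (Finset V)) (hsub : 𝒯' ⊆ 𝒯)
    (hrep : ∀ X ∈ 𝒯, ∀ Y : Finset V, Disjoint Y X → Y.card ≤ 2 * q →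
      ∃ X' ∈ 𝒯', Disjoint X' Y) :
    (∃ T : Finset (V × V), IsOutTreeOf G T r ∧
        internalCount T r = k - q ∧ leafCount T r = ℓ - q ∧
        ∃ P : Finset (V × V), P.card = q ∧ IsDisjointTwoPaths G P ∧
          ∀ e ∈ P, Disjoint (pairNodes e) (otNodes T r)) ↔
    (∃ X ∈ 𝒯', ∃ M : Finset (Sym2 V), q ≤ M.card ∧
        (∀ e ∈ M, e ∈ (SimpleGraph.fromRel G).edgeSet ∧ ∀ v ∈ e, v ∉ X) ∧
        ∀ e ∈ M, ∀ e' ∈ M, e ≠ e' → ∀ v : V, v ∈ e → v ∉ e') := by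
  constructor
  · rintro ⟨T, hT, hint, hleaf, P, hPq, hP, hPT⟩
    have hT𝒯 : otNodes T r ∈ 𝒯 := (h𝒯 _).2 ⟨T, hT, rfl, hint, hleaf⟩
    obtain ⟨X, hX, hXP⟩ := hrep _ hT𝒯 (P.biUnion pairNodes)
      ((Finset.disjoint_biUnion_left _ _ _).2 hPT)
      (hP.card_biUnion_pairNodes.trans_le (by rw [hPq]))
    refine ⟨X, hX, (exists_disjointTwoPaths_iff_exists_matching X q).1 ⟨P, hPq, hP, ?_⟩⟩
    exact (Finset.disjoint_biUnion_left _ _ _).1 hXP.symm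
  · rintro ⟨X, hX, hM⟩
    obtain ⟨T, hT, rfl, hint, hleaf⟩ := (h𝒯 X).1 (hsub hX)
    exact ⟨T, hT, hint, hleaf, (exists_disjointTwoPaths_iff_exists_matching _ q).2 hM⟩

theorem stmt10 [DecidableEq V] [Fintype V] (G : V → V → Prop) (r : V) (k ℓ q : ℕ)
    (hlk : ℓ ≤ k) (hq1 : 2 * ℓ - k ≤ q) (hq2 : q ≤ ℓ)
    (hbr : ∃ B : Finset (V × V), IsOutBranchingOf G B r)
    (𝒯 : Finset (Finset V))
    (h𝒯 : ∀ X : Finset V, X ∈ 𝒯 ↔ ∃ T : Finset (V × V), IsOutTreeOf G T r ∧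
        otNodes T r = X ∧ internalCount T r = k - q ∧ leafCount T r = ℓ - q)
    (𝒯' : Finset (Finset V)) (hsub : 𝒯' ⊆ 𝒯)
    (hrep : ∀ X ∈ 𝒯, ∀ Y : Finset V, Disjoint Y X → Y.card ≤ 2 * q →
      ∃ X' ∈ 𝒯', Disjoint X' Y) :
    (∃ T : Finset (V × V), IsOutTreeOf G T r ∧
        internalCount T r = k - q ∧ leafCount T r = ℓ - q ∧
        ∃ P : Finset (V × V), P.card = q ∧ IsDisjointTwoPaths G P ∧
          ∀ e ∈ P, Disjoint (pairNodes e) (otNodes T r)) ↔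
    (∃ X ∈ 𝒯', ∃ M : Finset (Sym2 V), q ≤ M.card ∧
        (∀ e ∈ M, e ∈ (SimpleGraph.fromRel G).edgeSet ∧ ∀ v ∈ e, v ∉ X) ∧
        ∀ e ∈ M, ∀ e' ∈ M, e ≠ e' → ∀ v : V, v ∈ e → v ∉ e') :=
  stmt10_general G r k ℓ q 𝒯 h𝒯 𝒯' hsub hrep
end

section
/- Let G be a finite undirected graph and k ≥ 1, and suppose G has a k-packing. Then for every (k−1)-packing S_1 = (V_1,E_1), …, S_{k−1} = (V_{k−1},E_{k−1}) in G, G has a k-packing whose paths contain at least ⌈2.5(k−1)⌉ (i.e., ⌈5(k−1)/2⌉) nodes from V_1 ∪ … ∪ V_{k−1}. -/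
variable {V : Type*}

/-- The node set of a triple of vertices. -/
def tripleNodes [DecidableEq V] (p : V × V × V) : Finset V := {p.1, p.2.1, p.2.2}

/-- `P` is a `t`-packing of the undirected graph `G`: `t` pairwise node-disjoint simple
paths, each on exactly `3` nodes (the `i`-th path visiting the three distinct nodes of the
triple `P i` in order). -/
def IsP2Packing [DecidableEq V] (G : SimpleGraph V) (t : ℕ) (P : Fin t → V × V × V) : Prop :=
  (∀ i, (tripleNodes (P i)).card = 3 ∧
    G.Adj (P i).1 (P i).2.1 ∧ G.Adj (P i).2.1 (P i).2.2) ∧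
  ∀ i j, i ≠ j → Disjoint (tripleNodes (P i)) (tripleNodes (P j))


/-!
Take a `k`-packing `Q` that covers as many nodes of `P` as possible and, among those, contains
as many paths of `P` as possible. Exchanging one path of `Q` for a path of `P` shows that every
path of `P` has at least two nodes covered by `Q`. If a path of `P` has exactly two, its
uncovered node `f` is adjacent to a covered node `q` lying on a path `{q, n, r}` of `Q` next to
`n`; replacing that path by `f q n` keeps `Q` optimal, and this forces `r` onto a fully covered
path of `P`. Two such rotations dropping nodes of the same path of `P` could be performed one
after the other, leaving that path with a single covered node. So the path of the dropped node
depends injectively on the path with two covered nodes, and `Q` covers at least `5(k - 1)/2`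
nodes of `P`.
-/

open Finset

namespace Finset

variable {α : Type*} [DecidableEq α] {s : Finset α} {a b c : α}

theorem eq_insert_insert_singleton_of_card_eq_three (hs : #s = 3) (ha : a ∈ s) (hb : b ∈ s)
    (hc : c ∈ s) (hab : a ≠ b) (hac : a ≠ c) (hbc : b ≠ c) : s = {a, b, c} :=
  (eq_of_subset_of_card_le (by simp [insert_subset_iff, ha, hb, hc])
    (by rw [hs, card_eq_three.2 ⟨a, b, c, hab, hac, hbc, rfl⟩])).symm

theorem exists_eq_insert_insert_singleton_of_card_eq_three (hs : #s = 3) (ha : a ∈ s)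
    (hb : b ∈ s) (hab : a ≠ b) : ∃ c, a ≠ c ∧ b ≠ c ∧ s = {a, b, c} := by
  obtain ⟨c, hc, hcb⟩ :=
    exists_mem_ne (s := s.erase a) (by rw [card_erase_of_mem ha, hs]; simp) b
  obtain ⟨hca, hc⟩ := mem_erase.1 hc
  exact ⟨c, hca.symm, hcb.symm,
    eq_insert_insert_singleton_of_card_eq_three hs ha hb hc hab hca.symm hcb.symm⟩

theorem card_insert_inter (ha : a ∉ s) (t : Finset α) :
    #(insert a s ∩ t) = #(s ∩ t) + if a ∈ t then 1 else 0 := by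
  split_ifs with h
  · rw [insert_inter_of_mem h, card_insert_of_notMem fun h' => ha (mem_inter.1 h').1]
  · rw [insert_inter_of_notMem h, add_zero]

theorem five_mul_card_le_two_mul_sum {ι : Type*} (s : Finset ι) (d : ι → ℕ)
    (h2 : ∀ i ∈ s, 2 ≤ d i) (hcard : #{i ∈ s | d i = 2} ≤ #{i ∈ s | d i ≠ 2}) :
    5 * #s ≤ 2 * ∑ i ∈ s, d i := by
  rw [← sum_filter_add_sum_filter_not s (d · = 2),
    ← card_filter_add_card_filter_not (d · = 2)]
  simp only [← ne_eq] at *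
  have hA : ∑ i ∈ s with d i = 2, d i = 2 * #{i ∈ s | d i = 2} := by
    rw [sum_congr rfl fun i hi => (mem_filter.1 hi).2, sum_const, smul_eq_mul, mul_comm]
  have hB : #{i ∈ s | d i ≠ 2} * 3 ≤ ∑ i ∈ s with d i ≠ 2, d i := by
    refine card_nsmul_le_sum _ _ 3 fun i hi => ?_
    have := h2 i (mem_filter.1 hi).1
    have := (mem_filter.1 hi).2
    omega
  omega

end Finset

section

variable [DecidableEq V] {G : SimpleGraph V}

section Packing

variable {t : ℕ} {Q : Fin t → V × V × V}

@[simp] theorem mem_tripleNodes {p : V × V × V} {x : V} :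
    x ∈ tripleNodes p ↔ x = p.1 ∨ x = p.2.1 ∨ x = p.2.2 := by
  simp [tripleNodes]

def IsP2Path (G : SimpleGraph V) (p : V × V × V) : Prop :=
  (tripleNodes p).card = 3 ∧ G.Adj p.1 p.2.1 ∧ G.Adj p.2.1 p.2.2

theorem IsP2Path.exists_adj {p : V × V × V} (hp : IsP2Path G p) {x : V}
    (hx : x ∈ tripleNodes p) : ∃ y ∈ tripleNodes p, G.Adj x y := by
  obtain ⟨-, h₁, h₂⟩ := hp
  rcases mem_tripleNodes.1 hx with rfl | rfl | rfl
  · exact ⟨_, by simp, h₁⟩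
  · exact ⟨_, by simp, h₁.symm⟩
  · exact ⟨_, by simp, h₂.symm⟩

def packingNodes (Q : Fin t → V × V × V) : Finset V :=
  univ.biUnion fun j => tripleNodes (Q j)

theorem mem_packingNodes {x : V} :
    x ∈ packingNodes Q ↔ ∃ j, x ∈ tripleNodes (Q j) := by
  simp [packingNodes]

theorem tripleNodes_subset_packingNodes (Q : Fin t → V × V × V) (j : Fin t) :
    tripleNodes (Q j) ⊆ packingNodes Q :=
  fun _ hx => mem_packingNodes.2 ⟨j, hx⟩

theorem mem_packingNodes_update {j : Fin t} {D : V × V × V}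
    {x : V} : x ∈ packingNodes (Function.update Q j D) ↔
      x ∈ tripleNodes D ∨ ∃ j' ≠ j, x ∈ tripleNodes (Q j') := by
  simp only [mem_packingNodes]
  constructor
  · rintro ⟨j', hj'⟩
    rcases eq_or_ne j' j with rfl | hne
    · exact Or.inl (by simpa using hj')
    · exact Or.inr ⟨j', hne, by simpa [hne] using hj'⟩
  · rintro (h | ⟨j', hne, h⟩)
    · exact ⟨j, by simpa using h⟩
    · exact ⟨j', by simpa [hne] using h⟩

def numCovered (Q : Fin t → V × V × V) (S : Finset V) : ℕ :=
  #(S ∩ packingNodes Q)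

theorem numCovered_le_card (Q : Fin t → V × V × V) (S : Finset V) :
    numCovered Q S ≤ #S :=
  card_le_card inter_subset_left

theorem numCovered_eq_card_iff {S : Finset V} :
    numCovered Q S = #S ↔ S ⊆ packingNodes Q := by
  rw [numCovered, ← inter_eq_left]
  exact ⟨fun h => eq_of_subset_of_card_le inter_subset_left h.ge, fun h => by rw [h]⟩

theorem numCovered_lt_card {S : Finset V} {x : V}
    (hx : x ∈ S) (hxQ : x ∉ packingNodes Q) : numCovered Q S < #S :=
  card_lt_card ⟨inter_subset_left, fun h => hxQ (mem_inter.1 (h hx)).2⟩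

theorem numCovered_packingNodes_comm {s : ℕ} (P : Fin s → V × V × V)
    (Q : Fin t → V × V × V) :
    numCovered P (packingNodes Q) = numCovered Q (packingNodes P) := by
  rw [numCovered, numCovered, inter_comm]

namespace IsP2Packing

theorem isP2Path (hQ : IsP2Packing G t Q) (j : Fin t) : IsP2Path G (Q j) :=
  hQ.1 j

theorem eq_of_mem (hQ : IsP2Packing G t Q) {x : V} {j j' : Fin t}
    (hj : x ∈ tripleNodes (Q j)) (hj' : x ∈ tripleNodes (Q j')) : j = j' := by
  by_contra hne
  exact disjoint_left.1 (hQ.2 j j' hne) hj hj'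

theorem numCovered_packingNodes (hQ : IsP2Packing G t Q) {s : ℕ} (X : Fin s → V × V × V) :
    numCovered X (packingNodes Q) = ∑ j, numCovered X (tripleNodes (Q j)) := by
  rw [numCovered, packingNodes, biUnion_inter, card_biUnion]
  · rfl
  · exact fun j _ j' _ hne =>
      (hQ.2 j j' hne).mono inter_subset_left inter_subset_left

theorem update (hQ : IsP2Packing G t Q) {j : Fin t} {D : V × V × V} (hD : IsP2Path G D)
    (hcov : ∀ x ∈ tripleNodes D, x ∈ packingNodes Q → x ∈ tripleNodes (Q j)) :
    IsP2Packing G t (Function.update Q j D) := by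
  have hdisj : ∀ j' ≠ j, Disjoint (tripleNodes D) (tripleNodes (Q j')) := fun j' hne =>
    disjoint_left.2 fun x hxD hxj' =>
      hne (hQ.eq_of_mem hxj' (hcov x hxD (tripleNodes_subset_packingNodes Q j' hxj')))
  refine ⟨fun i => show IsP2Path G _ from ?_, fun i i' hne => ?_⟩
  · rcases eq_or_ne i j with rfl | hi
    · simpa using hD
    · simpa [hi] using hQ.isP2Path i
  · rcases eq_or_ne i j with rfl | hi
    · simpa [hne.symm] using hdisj i' hne.symm
    · rcases eq_or_ne i' j with rfl | hi'
      · simpa [hi] using (hdisj i hi).symm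
      · simpa [hi, hi'] using hQ.2 i i' hne

theorem numCovered_packingNodes_update (hQ : IsP2Packing G t Q) {j : Fin t} {D : V × V × V}
    (hQ' : IsP2Packing G t (Function.update Q j D)) {s : ℕ} (X : Fin s → V × V × V) :
    numCovered X (packingNodes (Function.update Q j D)) + numCovered X (tripleNodes (Q j)) =
      numCovered X (packingNodes Q) + numCovered X (tripleNodes D) := by
  rw [hQ'.numCovered_packingNodes, hQ.numCovered_packingNodes,
    ← Function.comp_def (fun p => numCovered X (tripleNodes p)), Function.comp_update,
    sum_update_of_mem (mem_univ j), ← add_sum_erase _ _ (mem_univ j), sdiff_singleton_eq_erase]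
  simp only [Function.comp_apply]
  ring

variable {m : ℕ} {P : Fin m → V × V × V}

theorem tripleNodes_ne_of_mem (hP : IsP2Packing G m P) {x : V} {j : Fin t} {i : Fin m}
    (hxj : x ∈ tripleNodes (Q j)) (hxi : x ∈ tripleNodes (P i))
    (hi : ¬ tripleNodes (P i) ⊆ packingNodes Q) (l : Fin m) :
    tripleNodes (Q j) ≠ tripleNodes (P l) := by
  intro h
  obtain rfl := hP.eq_of_mem (h ▸ hxj) hxi
  exact hi (h ▸ tripleNodes_subset_packingNodes Q j)

theorem exists_tripleNodes_ne (hQ : IsP2Packing G t Q) (hmt : m < t) (P : Fin m → V × V × V) :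
    ∃ j, ∀ l, tripleNodes (Q j) ≠ tripleNodes (P l) := by
  by_contra! h
  choose g hg using h
  have hg_inj : Function.Injective g := fun j j' hjj' => by
    obtain ⟨x, hx⟩ := card_pos.1 (by rw [(hQ.isP2Path j).1]; omega)
    exact hQ.eq_of_mem hx (by rw [hg j', ← hjj', ← hg j]; exact hx)
  have := Fintype.card_le_of_injective g hg_inj
  simp only [Fintype.card_fin] at this
  omega

end IsP2Packing

end Packing

variable {m k : ℕ} {P : Fin m → V × V × V} {Q : Fin k → V × V × V}

def realized (P : Fin m → V × V × V) (Q : Fin k → V × V × V) : Finset (Fin m) :=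
  {l | ∃ j, tripleNodes (Q j) = tripleNodes (P l)}

theorem notMem_realized {l : Fin m} (hl : ¬ tripleNodes (P l) ⊆ packingNodes Q) :
    l ∉ realized P Q := by
  simp only [realized, mem_filter, mem_univ, true_and, not_exists]
  exact fun j h => hl (h ▸ tripleNodes_subset_packingNodes Q j)

theorem realized_subset_update {j : Fin k} (hj : ∀ l, tripleNodes (Q j) ≠ tripleNodes (P l))
    (D : V × V × V) : realized P Q ⊆ realized P (Function.update Q j D) := by
  simp only [subset_iff, realized, mem_filter, mem_univ, true_and]
  rintro l ⟨j', hj'⟩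
  have hne : j' ≠ j := by rintro rfl; exact hj l hj'
  exact ⟨j', by simpa [hne] using hj'⟩

theorem mem_realized_update (j : Fin k) (l : Fin m) :
    l ∈ realized P (Function.update Q j (P l)) := by
  simp only [realized, mem_filter, mem_univ, true_and]
  exact ⟨j, by simp⟩

structure IsOptimalPacking (G : SimpleGraph V) (P : Fin m → V × V × V)
    (Q : Fin k → V × V × V) : Prop where
  isP2Packing : IsP2Packing G k Q
  numCovered_le : ∀ Q', IsP2Packing G k Q' →
    numCovered P (packingNodes Q') ≤ numCovered P (packingNodes Q)
  card_realized_le : ∀ Q', IsP2Packing G k Q' →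
    numCovered P (packingNodes Q') = numCovered P (packingNodes Q) →
      #(realized P Q') ≤ #(realized P Q)

theorem exists_isOptimalPacking [Fintype V] (P : Fin m → V × V × V)
    (h : ∃ Q : Fin k → V × V × V, IsP2Packing G k Q) :
    ∃ Q : Fin k → V × V × V, IsOptimalPacking G P Q := by
  classical
  obtain ⟨Q', hQ'⟩ := h
  let S : Finset (Fin k → V × V × V) := {Q | IsP2Packing G k Q}
  obtain ⟨Q₀, hQ₀, hmax₀⟩ := S.exists_max_image (fun Q => numCovered P (packingNodes Q))
    ⟨Q', by simpa [S] using hQ'⟩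
  let S' := S.filter fun Q => numCovered P (packingNodes Q) = numCovered P (packingNodes Q₀)
  obtain ⟨Q, hQ, hmax⟩ :=
    S'.exists_max_image (fun Q => #(realized P Q)) ⟨Q₀, by simp [S', hQ₀]⟩
  simp only [S', S, mem_filter, mem_univ, true_and] at hQ hQ₀ hmax hmax₀
  exact ⟨Q, hQ.1, fun Q' hQ' => hQ.2 ▸ hmax₀ Q' hQ',
    fun Q' hQ' he => hmax Q' ⟨hQ', he.trans hQ.2⟩⟩

namespace IsOptimalPacking

variable (hopt : IsOptimalPacking G P Q)
include hopt

theorem numCovered_le_of_update {j : Fin k} {D : V × V × V} (hD : IsP2Path G D)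
    (hcov : ∀ x ∈ tripleNodes D, x ∈ packingNodes Q → x ∈ tripleNodes (Q j)) :
    numCovered P (tripleNodes D) ≤ numCovered P (tripleNodes (Q j)) := by
  have hQ' := hopt.isP2Packing.update hD hcov
  have := hopt.isP2Packing.numCovered_packingNodes_update hQ' P
  have := hopt.numCovered_le _ hQ'
  omega

theorem exists_mem_packingNodes_notMem (hP : IsP2Packing G m P) {l : Fin m} {j : Fin k}
    (hl : ¬ tripleNodes (P l) ⊆ packingNodes Q)
    (hj : ∀ l', tripleNodes (Q j) ≠ tripleNodes (P l')) :
    ∃ x ∈ tripleNodes (P l), x ∈ packingNodes Q ∧ x ∉ tripleNodes (Q j) := by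
  by_contra! hcov
  -- then replacing `Q j` by `P l` loses no covered node and realizes the new path `P l`
  have hQ' := hopt.isP2Packing.update (hP.isP2Path l) hcov
  have hsum := hopt.isP2Packing.numCovered_packingNodes_update hQ' P
  have hPl : numCovered P (tripleNodes (P l)) = 3 := by
    rw [numCovered_eq_card_iff.2 (tripleNodes_subset_packingNodes P l), (hP.isP2Path l).1]
  have hQj := (numCovered_le_card P (tripleNodes (Q j))).trans_eq (hopt.isP2Packing.isP2Path j).1
  have hle := hopt.numCovered_le _ hQ'
  have hreal : #(realized P Q) < #(realized P (Function.update Q j (P l))) :=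
    card_lt_card <| ssubset_of_subset_of_ne (realized_subset_update hj _) fun h =>
      notMem_realized hl (h ▸ mem_realized_update j l)
  exact hreal.not_ge (hopt.card_realized_le _ hQ' (by omega))

theorem two_le_numCovered (hP : IsP2Packing G m P) (hmk : m < k) (i : Fin m) :
    2 ≤ numCovered Q (tripleNodes (P i)) := by
  by_contra! h
  have hi : ¬ tripleNodes (P i) ⊆ packingNodes Q := fun hsub => by
    rw [numCovered_eq_card_iff.2 hsub, (hP.isP2Path i).1] at h
    omega
  obtain ⟨j, hj, hcov⟩ : ∃ j, (∀ l, tripleNodes (Q j) ≠ tripleNodes (P l)) ∧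
      ∀ x ∈ tripleNodes (P i), x ∈ packingNodes Q → x ∈ tripleNodes (Q j) := by
    rcases (tripleNodes (P i) ∩ packingNodes Q).eq_empty_or_nonempty with he | ⟨v, hv⟩
    · obtain ⟨j, hj⟩ := hopt.isP2Packing.exists_tripleNodes_ne hmk P
      exact ⟨j, hj, fun x hx hxQ => by simpa [he] using mem_inter.2 ⟨hx, hxQ⟩⟩
    · obtain ⟨j, hvj⟩ := mem_packingNodes.1 (mem_inter.1 hv).2
      refine ⟨j, hP.tripleNodes_ne_of_mem hvj (mem_inter.1 hv).1 hi, fun x hx hxQ => ?_⟩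
      rwa [card_le_one.1 (by rw [← numCovered]; omega) x (mem_inter.2 ⟨hx, hxQ⟩) v hv]
  obtain ⟨x, hx, hxQ, hxj⟩ := hopt.exists_mem_packingNodes_notMem hP hi hj
  exact hxj (hcov x hx hxQ)

end IsOptimalPacking

/-- Replacing `Q j` by the path `f q n` trades the covered node `r` for the uncovered node `f`
of `P i`. -/
structure IsRotation (G : SimpleGraph V) (P : Fin m → V × V × V) (Q : Fin k → V × V × V)
    (i : Fin m) (j : Fin k) (f q n r : V) : Prop where
  free_mem : f ∈ tripleNodes (P i)
  free_notMem : f ∉ packingNodes Q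
  pivot_mem : q ∈ tripleNodes (P i)
  adj_free : G.Adj f q
  adj_next : G.Adj q n
  tripleNodes_eq : tripleNodes (Q j) = {q, n, r}
  pivot_ne : q ≠ r
  next_ne : n ≠ r

namespace IsRotation

variable {i : Fin m} {j : Fin k} {f q n r : V} (ρ : IsRotation G P Q i j f q n r)
include ρ

theorem pivot_mem_tripleNodes : q ∈ tripleNodes (Q j) := by simp [ρ.tripleNodes_eq]

theorem next_mem_tripleNodes : n ∈ tripleNodes (Q j) := by simp [ρ.tripleNodes_eq]

theorem dropped_mem_tripleNodes : r ∈ tripleNodes (Q j) := by simp [ρ.tripleNodes_eq]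

theorem free_ne_next : f ≠ n := fun h =>
  ρ.free_notMem (h ▸ tripleNodes_subset_packingNodes Q j ρ.next_mem_tripleNodes)

theorem dropped_mem_packingNodes : r ∈ packingNodes Q :=
  tripleNodes_subset_packingNodes Q j ρ.dropped_mem_tripleNodes

theorem free_ne_dropped : f ≠ r := fun h => ρ.free_notMem (h ▸ ρ.dropped_mem_packingNodes)

theorem isP2Path : IsP2Path G (f, q, n) :=
  ⟨card_eq_three.2 ⟨f, q, n, ρ.adj_free.ne, ρ.free_ne_next, ρ.adj_next.ne, rfl⟩,
    ρ.adj_free, ρ.adj_next⟩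

theorem mem_tripleNodes_of_mem_packingNodes :
    ∀ x ∈ tripleNodes (f, q, n), x ∈ packingNodes Q → x ∈ tripleNodes (Q j) := by
  intro x hx hxQ
  rcases mem_tripleNodes.1 hx with rfl | rfl | rfl
  · exact absurd hxQ ρ.free_notMem
  · exact ρ.pivot_mem_tripleNodes
  · exact ρ.next_mem_tripleNodes

theorem not_subset : ¬ tripleNodes (P i) ⊆ packingNodes Q :=
  fun h => ρ.free_notMem (h ρ.free_mem)

theorem tripleNodes_ne (hP : IsP2Packing G m P) (l : Fin m) :
    tripleNodes (Q j) ≠ tripleNodes (P l) :=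
  hP.tripleNodes_ne_of_mem ρ.pivot_mem_tripleNodes ρ.pivot_mem ρ.not_subset l

theorem numCovered_tripleNodes (X : Fin m → V × V × V) :
    numCovered X (tripleNodes (Q j)) =
      #({q, n} ∩ packingNodes X) + if r ∈ packingNodes X then 1 else 0 := by
  rw [numCovered, ρ.tripleNodes_eq,
    ← card_insert_inter (by simp [ρ.pivot_ne.symm, ρ.next_ne.symm])]
  congr 2
  ext x
  simp only [mem_insert, mem_singleton]
  tauto

theorem numCovered_rotated :
    numCovered P (tripleNodes (f, q, n)) = #({q, n} ∩ packingNodes P) + 1 := by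
  rw [numCovered, show tripleNodes (f, q, n) = insert f {q, n} from rfl,
    card_insert_inter (by simp [ρ.adj_free.ne, ρ.free_ne_next]),
    if_pos (tripleNodes_subset_packingNodes P i ρ.free_mem)]

theorem packingNodes_update (hQ : IsP2Packing G k Q) :
    packingNodes (Function.update Q j (f, q, n)) = insert f ((packingNodes Q).erase r) := by
  ext x
  rw [mem_packingNodes_update, mem_insert, mem_erase, mem_packingNodes]
  constructor
  · rintro (hx | ⟨j', hj', hx⟩)
    · rcases mem_tripleNodes.1 hx with rfl | rfl | rfl
      · exact Or.inl rfl
      · exact Or.inr ⟨ρ.pivot_ne, j, ρ.pivot_mem_tripleNodes⟩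
      · exact Or.inr ⟨ρ.next_ne, j, ρ.next_mem_tripleNodes⟩
    · refine Or.inr ⟨?_, j', hx⟩
      rintro rfl
      exact hj' (hQ.eq_of_mem hx ρ.dropped_mem_tripleNodes)
  · rintro (rfl | ⟨hxr, j', hx⟩)
    · exact Or.inl (by simp)
    · rcases eq_or_ne j' j with rfl | hj'
      · rw [ρ.tripleNodes_eq] at hx
        simp only [mem_insert, mem_singleton] at hx
        exact Or.inl (by simp; tauto)
      · exact Or.inr ⟨j', hj', hx⟩

theorem numCovered_update (hQ : IsP2Packing G k Q) {S : Finset V} (hf : f ∉ S) :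
    numCovered (Function.update Q j (f, q, n)) S = numCovered Q (S.erase r) := by
  rw [numCovered, numCovered, ρ.packingNodes_update hQ, inter_insert_of_notMem hf, inter_erase,
    erase_inter]

theorem update {i' : Fin m} {j' : Fin k} {f' q' n' r' : V}
    (ρ' : IsRotation G P Q i' j' f' q' n' r') (hQ : IsP2Packing G k Q) (hP : IsP2Packing G m P)
    (hi : i ≠ i') (hj : j ≠ j') :
    IsRotation G P (Function.update Q j (f, q, n)) i' j' f' q' n' r' where
  free_mem := ρ'.free_mem
  free_notMem := by
    rw [ρ.packingNodes_update hQ, mem_insert, mem_erase, not_or]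
    exact ⟨fun h => hi (hP.eq_of_mem ρ.free_mem (h ▸ ρ'.free_mem)),
      fun h => ρ'.free_notMem h.2⟩
  pivot_mem := ρ'.pivot_mem
  adj_free := ρ'.adj_free
  adj_next := ρ'.adj_next
  tripleNodes_eq := by rw [Function.update_of_ne hj.symm, ρ'.tripleNodes_eq]
  pivot_ne := ρ'.pivot_ne
  next_ne := ρ'.next_ne

end IsRotation

theorem IsP2Packing.exists_isRotation (hQ : IsP2Packing G k Q) (hP : IsP2Packing G m P)
    {i : Fin m} (hi : numCovered Q (tripleNodes (P i)) = 2) :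
    ∃ j f q n r, IsRotation G P Q i j f q n r := by
  obtain ⟨f, hf, hfQ⟩ := not_subset.1 fun h => by
    rw [numCovered_eq_card_iff.2 h, (hP.isP2Path i).1] at hi
    omega
  obtain ⟨q, hq, hfq⟩ := (hP.isP2Path i).exists_adj hf
  have hqQ : q ∈ packingNodes Q := by
    by_contra hqQ
    have := numCovered_lt_card (Q := Q) (mem_erase.2 ⟨hfq.ne.symm, hq⟩) hqQ
    rw [numCovered, erase_inter, erase_eq_of_notMem fun h => hfQ (mem_inter.1 h).2,
      card_erase_of_mem hf, (hP.isP2Path i).1] at this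
    rw [numCovered] at hi
    omega
  obtain ⟨j, hqj⟩ := mem_packingNodes.1 hqQ
  obtain ⟨n, hn, hqn⟩ := (hQ.isP2Path j).exists_adj hqj
  obtain ⟨r, hqr, hnr, hj⟩ :=
    exists_eq_insert_insert_singleton_of_card_eq_three (hQ.isP2Path j).1 hqj hn hqn.ne
  exact ⟨j, f, q, n, r, hf, hfQ, hq, hfq, hqn, hj, hqr, hnr⟩

namespace IsOptimalPacking

variable (hopt : IsOptimalPacking G P Q) {i : Fin m} {j : Fin k} {f q n r : V}
include hopt

theorem mem_packingNodes_of_isRotation (ρ : IsRotation G P Q i j f q n r) :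
    r ∈ packingNodes P := by
  by_contra hr
  have := hopt.numCovered_le_of_update ρ.isP2Path ρ.mem_tripleNodes_of_mem_packingNodes
  rw [ρ.numCovered_rotated, ρ.numCovered_tripleNodes, if_neg hr] at this
  omega

theorem update_rotation (hP : IsP2Packing G m P) (ρ : IsRotation G P Q i j f q n r) :
    IsOptimalPacking G P (Function.update Q j (f, q, n)) := by
  have hQ' := hopt.isP2Packing.update ρ.isP2Path ρ.mem_tripleNodes_of_mem_packingNodes
  have hsum := hopt.isP2Packing.numCovered_packingNodes_update hQ' P
  rw [ρ.numCovered_rotated, ρ.numCovered_tripleNodes,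
    if_pos (hopt.mem_packingNodes_of_isRotation ρ)] at hsum
  have hcov : numCovered P (packingNodes (Function.update Q j (f, q, n))) =
      numCovered P (packingNodes Q) := by omega
  have hreal := card_le_card (realized_subset_update (ρ.tripleNodes_ne hP) (f, q, n))
  exact ⟨hQ', fun Q' hQ'' => hcov ▸ hopt.numCovered_le Q' hQ'',
    fun Q' hQ'' he => (hopt.card_realized_le Q' hQ'' (he.trans hcov)).trans hreal⟩

theorem subset_of_isRotation (hP : IsP2Packing G m P) (hmk : m < k)
    (ρ : IsRotation G P Q i j f q n r) {l : Fin m} (hr : r ∈ tripleNodes (P l)) :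
    tripleNodes (P l) ⊆ packingNodes Q := by
  by_contra hl
  have hli : l ≠ i := by
    rintro rfl
    obtain ⟨x, hx, hxQ, hxj⟩ := hopt.exists_mem_packingNodes_notMem hP hl (ρ.tripleNodes_ne hP)
    rw [eq_insert_insert_singleton_of_card_eq_three (hP.isP2Path l).1 ρ.free_mem ρ.pivot_mem hr
      ρ.adj_free.ne ρ.free_ne_dropped ρ.pivot_ne] at hx
    rcases mem_insert.1 hx with rfl | hx
    · exact ρ.free_notMem hxQ
    · rcases mem_insert.1 hx with rfl | hx
      · exact hxj ρ.pivot_mem_tripleNodes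
      · exact hxj (mem_singleton.1 hx ▸ ρ.dropped_mem_tripleNodes)
  obtain ⟨y, hy, hyQ⟩ := not_subset.1 hl
  have hyr : y ≠ r := fun h => hyQ (h ▸ ρ.dropped_mem_packingNodes)
  have h2 := (hopt.update_rotation hP ρ).two_le_numCovered hP hmk l
  rw [ρ.numCovered_update hopt.isP2Packing fun h => hli (hP.eq_of_mem h ρ.free_mem)] at h2
  have := numCovered_lt_card (mem_erase.2 ⟨hyr, hy⟩) hyQ
  rw [card_erase_of_mem hr, (hP.isP2Path l).1] at this
  omega

theorem ne_of_isRotation (hP : IsP2Packing G m P) (hmk : m < k)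
    {i' : Fin m} {j' : Fin k} {f' q' n' r' : V} (ρ : IsRotation G P Q i j f q n r)
    (ρ' : IsRotation G P Q i' j' f' q' n' r') (hi : i ≠ i') : j ≠ j' := by
  rintro rfl
  have hq : q ≠ q' := fun h => hi (hP.eq_of_mem ρ.pivot_mem (h ▸ ρ'.pivot_mem))
  obtain ⟨z, hqz, hq'z, hj⟩ := exists_eq_insert_insert_singleton_of_card_eq_three
    (hopt.isP2Packing.isP2Path j).1 ρ.pivot_mem_tripleNodes ρ'.pivot_mem_tripleNodes hq
  -- a rotation along the edge from `z` to one pivot would drop the other pivot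
  obtain ⟨y, hy, hzy⟩ := (hopt.isP2Packing.isP2Path j).exists_adj (show z ∈ _ by simp [hj])
  rw [hj] at hy
  rcases mem_insert.1 hy with rfl | hy
  · have ρz : IsRotation G P Q i j f y z q' :=
      ⟨ρ.free_mem, ρ.free_notMem, ρ.pivot_mem, ρ.adj_free, hzy.symm,
        hj.trans (by rw [pair_comm]), hq, hq'z.symm⟩
    exact ρ'.not_subset (hopt.subset_of_isRotation hP hmk ρz ρ'.pivot_mem)
  · rcases mem_insert.1 hy with rfl | hy
    · have ρz : IsRotation G P Q i' j f' y z q :=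
        ⟨ρ'.free_mem, ρ'.free_notMem, ρ'.pivot_mem, ρ'.adj_free, hzy.symm,
          hj.trans (by ext; simp; tauto), hq.symm, hqz.symm⟩
      exact ρ.not_subset (hopt.subset_of_isRotation hP hmk ρz ρ.pivot_mem)
    · exact hzy.ne (mem_singleton.1 hy).symm

theorem eq_of_isRotation (hP : IsP2Packing G m P) (hmk : m < k)
    {i' : Fin m} {j' : Fin k} {f' q' n' r' : V} (ρ : IsRotation G P Q i j f q n r)
    (ρ' : IsRotation G P Q i' j' f' q' n' r') {l : Fin m} (hr : r ∈ tripleNodes (P l))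
    (hr' : r' ∈ tripleNodes (P l)) : i = i' := by
  by_contra hi
  have hj := hopt.ne_of_isRotation hP hmk ρ ρ' hi
  have hl := hopt.subset_of_isRotation hP hmk ρ hr
  have hrr' : r ≠ r' := fun h =>
    hj (hopt.isP2Packing.eq_of_mem ρ.dropped_mem_tripleNodes (h ▸ ρ'.dropped_mem_tripleNodes))
  have ρ'' := ρ.update ρ' hopt.isP2Packing hP hi hj
  have h2 := ((hopt.update_rotation hP ρ).update_rotation hP ρ'').two_le_numCovered hP hmk l
  rw [ρ''.numCovered_update (hopt.isP2Packing.update ρ.isP2Path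
      ρ.mem_tripleNodes_of_mem_packingNodes) fun h => ρ'.free_notMem (hl h),
    ρ.numCovered_update hopt.isP2Packing fun h => ρ.free_notMem (hl (mem_of_mem_erase h))] at h2
  have := numCovered_le_card Q (((tripleNodes (P l)).erase r').erase r)
  rw [card_erase_of_mem (mem_erase.2 ⟨hrr', hr⟩), card_erase_of_mem hr',
    (hP.isP2Path l).1] at this
  omega

theorem five_mul_le_two_mul_numCovered (hP : IsP2Packing G m P) (hmk : m < k) :
    5 * m ≤ 2 * numCovered P (packingNodes Q) := by
  have hcard : #{i | numCovered Q (tripleNodes (P i)) = 2} ≤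
      #{i | numCovered Q (tripleNodes (P i)) ≠ 2} := by
    refine card_le_card_of_forall_subsingleton
      (fun i l => ∃ j f q n r, IsRotation G P Q i j f q n r ∧ r ∈ tripleNodes (P l)) ?_ ?_
    · intro i hi
      obtain ⟨j, f, q, n, r, ρ⟩ := hopt.isP2Packing.exists_isRotation hP (mem_filter.1 hi).2
      obtain ⟨l, hl⟩ := mem_packingNodes.1 (hopt.mem_packingNodes_of_isRotation ρ)
      refine ⟨l, mem_filter.2 ⟨mem_univ l, ?_⟩, j, f, q, n, r, ρ, hl⟩
      rw [numCovered_eq_card_iff.2 (hopt.subset_of_isRotation hP hmk ρ hl), (hP.isP2Path l).1]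
      decide
    · rintro l - i ⟨-, j, f, q, n, r, ρ, hr⟩ i' ⟨-, j', f', q', n', r', ρ', hr'⟩
      exact hopt.eq_of_isRotation hP hmk ρ ρ' hr hr'
  rw [numCovered_packingNodes_comm, hP.numCovered_packingNodes]
  simpa using five_mul_card_le_two_mul_sum univ _ (fun i _ => hopt.two_le_numCovered hP hmk i) hcard

end IsOptimalPacking

end

theorem stmt12 [DecidableEq V] [Fintype V] (G : SimpleGraph V) (k : ℕ) (hk : 1 ≤ k)
    (hpack : ∃ Q : Fin k → V × V × V, IsP2Packing G k Q)
    (P : Fin (k - 1) → V × V × V) (hP : IsP2Packing G (k - 1) P) :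
    ∃ Q : Fin k → V × V × V, IsP2Packing G k Q ∧
      (5 * (k - 1) + 1) / 2 ≤
        ((Finset.univ.biUnion fun i => tripleNodes (Q i)) ∩
          (Finset.univ.biUnion fun i => tripleNodes (P i))).card := by
  obtain ⟨Q, hopt⟩ := exists_isOptimalPacking P hpack
  have := hopt.five_mul_le_two_mul_numCovered hP (by omega)
  exact ⟨Q, hopt.isP2Packing, by unfold numCovered packingNodes at this; omega⟩
end

section
/- For any finite universe E, any family S of subsets of size p of E, and any parameter k ≥ p, there is a subfamily Ŝ ⊆ S of size at most C(k,p) (the binomial coefficient k choose p) that (k−p)-represents S; that is, for every X ∈ S and every Y ⊆ E∖X with |Y| ≤ k−p, there is X̂ ∈ Ŝ with X̂ ∩ Y = ∅. -/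
/-!
Take a minimal subfamily `𝒯 ⊆ 𝒮` that still `(k - p)`-represents `𝒮`. By minimality every
`X ∈ 𝒯` comes with a set `Y_X` of size at most `k - p` that misses `X` but meets every other
member of `𝒯`. The pairs `(X, Y_X)` therefore satisfy the hypotheses of Bollobás' two-families
inequality `∑ 1 / C(|A_i| + |B_i|, |A_i|) ≤ 1`, which bounds `|𝒯|` by `C(k, p)`.

Bollobás' inequality is proved by induction on a ground set `X` containing all the sets: for each
`x ∈ X` the pairs `(A_i, B_i \ {x})` with `x ∉ A_i` live in `X \ {x}`, and summing the inductive
bounds over `x ∈ X` counts every weight of the original system exactly `|X|` times.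
-/

open Finset

namespace Bollobas

variable {α ι : Type*} [DecidableEq α]

lemma inv_choose_pred_eq {a b : ℕ} (hb : 0 < b) :
    (b : ℚ) * ((a + (b - 1)).choose a : ℚ)⁻¹ = (a + b) * ((a + b).choose a : ℚ)⁻¹ := by
  obtain ⟨c, rfl⟩ := Nat.exists_eq_add_of_lt hb
  have key := Nat.choose_mul_succ_eq (a + c) a
  rw [show a + c + 1 - a = c + 1 by omega] at key
  have h1 : (0 : ℚ) < (a + c).choose a := by exact_mod_cast Nat.choose_pos (by omega)
  have h2 : (0 : ℚ) < (a + c + 1).choose a := by exact_mod_cast Nat.choose_pos (by omega)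
  simp only [zero_add, add_tsub_cancel_right, show a + (c + 1) = a + c + 1 by omega]
  have key' : ((a + c + 1).choose a : ℚ) * (c + 1) = (a + c).choose a * (a + c + 1) := by
    exact_mod_cast key.symm
  field_simp
  push_cast
  linear_combination key'

lemma sum_inv_choose_erase {X A B : Finset α} (hA : A ⊆ X) (hB : B ⊆ X) (hAB : Disjoint A B)
    (hBne : B.Nonempty) :
    ∑ x ∈ X \ A, ((#A + #(B.erase x)).choose #A : ℚ)⁻¹ = #X * ((#A + #B).choose #A : ℚ)⁻¹ := by
  have hsplit : X \ A = X \ (A ∪ B) ∪ B := by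
    ext x; simp only [mem_sdiff, mem_union]
    constructor
    · tauto
    · rintro (h | h)
      · tauto
      · exact ⟨hB h, disjoint_right.1 hAB h⟩
  have hcard : #(X \ (A ∪ B)) + #A + #B = #X := by
    rw [card_sdiff_of_subset (union_subset hA hB), card_union_of_disjoint hAB]
    have := card_le_card (union_subset hA hB)
    rw [card_union_of_disjoint hAB] at this
    omega
  have hrest : ∀ x ∈ X \ (A ∪ B), B.erase x = B := fun x hx =>
    erase_eq_of_notMem fun h => (mem_sdiff.1 hx).2 (mem_union_right _ h)
  have hrest_sum : ∑ x ∈ X \ (A ∪ B), ((#A + #(B.erase x)).choose #A : ℚ)⁻¹ =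
      #(X \ (A ∪ B)) * ((#A + #B).choose #A : ℚ)⁻¹ := by
    rw [sum_congr rfl fun x hx => by rw [hrest x hx], sum_const, nsmul_eq_mul]
  have hB_sum : ∑ x ∈ B, ((#A + #(B.erase x)).choose #A : ℚ)⁻¹ =
      #B * ((#A + (#B - 1)).choose #A : ℚ)⁻¹ := by
    rw [sum_congr rfl fun x hx => by rw [card_erase_of_mem hx], sum_const, nsmul_eq_mul]
  rw [hsplit, sum_union (disjoint_sdiff_self_left.mono_right subset_union_right), hrest_sum, hB_sum,
    inv_choose_pred_eq hBne.card_pos, ← hcard]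
  push_cast
  ring

lemma inv_choose_le_one (a b : ℕ) : ((a + b).choose a : ℚ)⁻¹ ≤ 1 :=
  inv_le_one_of_one_le₀ (by exact_mod_cast Nat.choose_pos (Nat.le_add_right a b))

lemma sum_inv_choose_le_one_of_subset (A : ι → Finset α) (X : Finset α) :
    ∀ (I : Finset ι) (B : ι → Finset α), (∀ i ∈ I, A i ⊆ X ∧ B i ⊆ X) →
      (∀ i ∈ I, Disjoint (A i) (B i)) → (∀ i ∈ I, ∀ j ∈ I, i ≠ j → ¬Disjoint (A i) (B j)) →
      ∑ i ∈ I, ((#(A i) + #(B i)).choose #(A i) : ℚ)⁻¹ ≤ 1 := by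
  induction X using Finset.strongInduction with
  | H X ih =>
  intro I B hX hdisj hcross
  by_cases hI : #I ≤ 1
  · calc ∑ i ∈ I, ((#(A i) + #(B i)).choose #(A i) : ℚ)⁻¹ ≤ ∑ i ∈ I, 1 :=
          sum_le_sum fun i _ => inv_choose_le_one _ _
      _ ≤ 1 := by simpa using hI
  have hBne : ∀ i ∈ I, (B i).Nonempty := by
    intro i hi
    obtain ⟨j, hj, hji⟩ := exists_mem_ne (not_le.1 hI) i
    exact (not_disjoint_iff_nonempty_inter.1 (hcross j hj i hi hji)).mono inter_subset_right
  obtain ⟨i₀, hi₀⟩ : I.Nonempty := card_pos.1 (by omega)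
  have hXpos : (0 : ℚ) < #X := by
    exact_mod_cast card_pos.2 ((hBne i₀ hi₀).mono (hX i₀ hi₀).2)
  refine le_of_mul_le_mul_left ?_ hXpos
  calc (#X : ℚ) * ∑ i ∈ I, ((#(A i) + #(B i)).choose #(A i) : ℚ)⁻¹
      = ∑ i ∈ I, ∑ x ∈ X \ A i, ((#(A i) + #((B i).erase x)).choose #(A i) : ℚ)⁻¹ := by
        rw [mul_sum]
        exact sum_congr rfl fun i hi =>
          (sum_inv_choose_erase (hX i hi).1 (hX i hi).2 (hdisj i hi) (hBne i hi)).symm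
    _ = ∑ x ∈ X, ∑ i ∈ I with x ∉ A i, ((#(A i) + #((B i).erase x)).choose #(A i) : ℚ)⁻¹ :=
        sum_comm' fun _ _ => by simp only [mem_sdiff, mem_filter]; tauto
    _ ≤ ∑ x ∈ X, 1 := by
        refine sum_le_sum fun x hx => ih _ (erase_ssubset hx) _ _ ?_ ?_ ?_
        · intro i hi
          obtain ⟨hi, hxA⟩ := mem_filter.1 hi
          exact ⟨subset_erase.2 ⟨(hX i hi).1, hxA⟩, erase_subset_erase x (hX i hi).2⟩
        · exact fun i hi => (hdisj i (mem_filter.1 hi).1).mono_right (erase_subset x _)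
        · intro i hi j hj hij hdis
          obtain ⟨hi, hxA⟩ := mem_filter.1 hi
          refine hcross i hi j (mem_filter.1 hj).1 hij (disjoint_left.2 fun y hyA hyB => ?_)
          exact disjoint_left.1 hdis hyA (mem_erase.2 ⟨fun h => hxA (h ▸ hyA), hyB⟩)
    _ = #X * 1 := by simp

theorem sum_inv_choose_le_one (I : Finset ι) (A B : ι → Finset α)
    (hdisj : ∀ i ∈ I, Disjoint (A i) (B i))
    (hcross : ∀ i ∈ I, ∀ j ∈ I, i ≠ j → ¬Disjoint (A i) (B j)) :
    ∑ i ∈ I, ((#(A i) + #(B i)).choose #(A i) : ℚ)⁻¹ ≤ 1 :=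
  sum_inv_choose_le_one_of_subset A (I.biUnion fun i => A i ∪ B i) I B
    (fun _ hi => union_subset_iff.1 (subset_biUnion_of_mem (fun i => A i ∪ B i) hi)) hdisj hcross

theorem card_le_choose (I : Finset ι) (A B : ι → Finset α) (p q : ℕ)
    (hA : ∀ i ∈ I, #(A i) = p) (hB : ∀ i ∈ I, #(B i) ≤ q)
    (hdisj : ∀ i ∈ I, Disjoint (A i) (B i))
    (hcross : ∀ i ∈ I, ∀ j ∈ I, i ≠ j → ¬Disjoint (A i) (B j)) :
    #I ≤ (p + q).choose p := by
  have hpos : (0 : ℚ) < (p + q).choose p := by exact_mod_cast Nat.choose_pos (Nat.le_add_right p q)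
  have hterm : ∀ i ∈ I, ((p + q).choose p : ℚ)⁻¹ ≤ ((#(A i) + #(B i)).choose #(A i) : ℚ)⁻¹ := by
    intro i hi
    rw [hA i hi]
    gcongr
    · exact_mod_cast Nat.choose_pos (Nat.le_add_right p _)
    · exact hB i hi
  have hsum : (#I : ℚ) * ((p + q).choose p : ℚ)⁻¹ ≤ 1 := by
    calc (#I : ℚ) * ((p + q).choose p : ℚ)⁻¹ = ∑ i ∈ I, ((p + q).choose p : ℚ)⁻¹ := by
          rw [sum_const, nsmul_eq_mul]
      _ ≤ _ := sum_le_sum hterm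
      _ ≤ 1 := sum_inv_choose_le_one I A B hdisj hcross
  rw [← div_eq_mul_inv, div_le_one hpos] at hsum
  exact_mod_cast hsum

end Bollobas

section Representation

variable {U : Type*} [DecidableEq U]

/-- `Represents E q 𝒮' 𝒮`: the family `𝒮'` `q`-represents `𝒮` inside the universe `E`. -/
def Represents (E : Finset U) (q : ℕ) (𝒮' 𝒮 : Finset (Finset U)) : Prop :=
  ∀ X ∈ 𝒮, ∀ Y ⊆ E \ X, #Y ≤ q → ∃ X' ∈ 𝒮', X' ∩ Y = ∅

lemma represents_self (E : Finset U) (q : ℕ) (𝒮 : Finset (Finset U)) : Represents E q 𝒮 𝒮 :=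
  fun X hX _ hY _ =>
    ⟨X, hX, disjoint_iff_inter_eq_empty.1 (disjoint_of_subset_right hY disjoint_sdiff)⟩

lemma exists_minimal_represents (E : Finset U) (q : ℕ) (𝒮 : Finset (Finset U)) :
    ∃ 𝒯 ⊆ 𝒮, Represents E q 𝒯 𝒮 ∧ ∀ X ∈ 𝒯, ¬Represents E q (𝒯.erase X) 𝒮 := by
  classical
  obtain ⟨𝒯, h𝒯, hmin⟩ := exists_min_image ({𝒯 ∈ 𝒮.powerset | Represents E q 𝒯 𝒮}) card
    ⟨𝒮, mem_filter.2 ⟨mem_powerset_self 𝒮, represents_self E q 𝒮⟩⟩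
  obtain ⟨h𝒯𝒮, hrep⟩ := mem_filter.1 h𝒯
  refine ⟨𝒯, mem_powerset.1 h𝒯𝒮, hrep, fun X hX hrep' => ?_⟩
  have := hmin (𝒯.erase X)
    (mem_filter.2 ⟨mem_powerset.2 ((erase_subset X 𝒯).trans (mem_powerset.1 h𝒯𝒮)), hrep'⟩)
  have := card_erase_lt_of_mem hX
  omega

lemma Represents.exists_isolating {E : Finset U} {q : ℕ} {𝒮 𝒯 : Finset (Finset U)}
    {X' : Finset U} (h : Represents E q 𝒯 𝒮) (h' : ¬Represents E q (𝒯.erase X') 𝒮) :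
    ∃ Y : Finset U, #Y ≤ q ∧ Disjoint X' Y ∧ ∀ Z ∈ 𝒯, Z ≠ X' → ¬Disjoint Z Y := by
  simp only [Represents, not_forall, not_exists, not_and] at h'
  obtain ⟨X, hX, Y, hYX, hYq, hmeet⟩ := h'
  obtain ⟨Z, hZ, hZY⟩ := h X hX Y hYX hYq
  obtain rfl : Z = X' := by_contra fun hZX' => hmeet Z (mem_erase.2 ⟨hZX', hZ⟩) hZY
  refine ⟨Y, hYq, disjoint_iff_inter_eq_empty.2 hZY, fun W hW hWZ hWY => ?_⟩
  exact hmeet W (mem_erase.2 ⟨hWZ, hW⟩) (disjoint_iff_inter_eq_empty.1 hWY)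

end Representation

theorem stmt14 {U : Type*} [DecidableEq U] (E : Finset U) (p k : ℕ) (hpk : p ≤ k)
    (𝒮 : Finset (Finset U)) (h𝒮 : ∀ S ∈ 𝒮, S ⊆ E ∧ S.card = p) :
    ∃ 𝒮' ⊆ 𝒮, 𝒮'.card ≤ k.choose p ∧
      ∀ X ∈ 𝒮, ∀ Y ⊆ E \ X, Y.card ≤ k - p → ∃ X' ∈ 𝒮', X' ∩ Y = ∅ := by
  obtain ⟨𝒯, h𝒯𝒮, hrep, hmin⟩ := exists_minimal_represents E (k - p) 𝒮
  refine ⟨𝒯, h𝒯𝒮, ?_, hrep⟩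
  choose! Y hYcard hdisj hmeet using fun X hX => hrep.exists_isolating (hmin X hX)
  have := Bollobas.card_le_choose 𝒯 id Y p (k - p) (fun X hX => (h𝒮 X (h𝒯𝒮 hX)).2) hYcard hdisj
    fun X hX Z hZ hXZ => hmeet Z hZ X hX hXZ
  rwa [Nat.add_sub_cancel' hpk] at this
end
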